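/- Under assumption (i) (joint independence of the instrument from all potential outcomes), for every instrument value z ∈ {1,…,K}, every treatment level i ∈ {0,1} and every outcome value y ∈ {0,1}: P(Y(x_i) = y) ≤ P(Y = y, X = i | Z = z) + P(X = 1−i | Z = z). -/
import Mathlib


open MeasureTheory ProbabilityTheory

/-- Under assumption (i) (joint independence of the instrument `Z` from all
potential outcomes `(Y(x₀), Y(x₁), X(z₁), …, X(z_K))`), for every instrument value `z`,
treatment level `i ∈ {0,1}` and outcome value `y ∈ {0,1}`:
`P(Y(xᵢ) = y) ≤ P(Y = y, X = i | Z = z) + P(X = 1−i | Z = z)`. -/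
theorem stmt0
    {Ω : Type*} [MeasurableSpace Ω] (P : Measure Ω) [IsProbabilityMeasure P]
    (K : ℕ) (hK : 1 ≤ K)
    (Z : Ω → Fin K) (Xz : Fin K → Ω → Fin 2) (Y0 Y1 : Ω → Fin 2)
    (hZ : Measurable Z) (hXz : ∀ z, Measurable (Xz z))
    (hY0 : Measurable Y0) (hY1 : Measurable Y1)
    (X : Ω → Fin 2) (hX : ∀ ω, X ω = Xz (Z ω) ω)
    (Y : Ω → Fin 2) (hY : ∀ ω, Y ω = if X ω = 0 then Y0 ω else Y1 ω)
    (hpos : ∀ z, 0 < P (Z ⁻¹' {z}))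
    (hindep : IndepFun Z (fun ω => (Y0 ω, Y1 ω, fun z => Xz z ω)) P) :
    ∀ (z : Fin K) (i y : Fin 2),
      (P {ω | (if i = 0 then Y0 ω else Y1 ω) = y}).toReal ≤
        (P[|Z ⁻¹' {z}] {ω | Y ω = y ∧ X ω = i}).toReal +
          (P[|Z ⁻¹' {z}] {ω | X ω = 1 - i}).toReal := by
  intro z i y
  set s := Z ⁻¹' {z} with hs
  have hsm : MeasurableSet s := hZ (measurableSet_singleton z)
  have hsne : P s ≠ 0 := (hpos z).ne'
  have hsfin : P s ≠ ⊤ := measure_ne_top P s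
  set A : Set Ω := {ω | (if i = 0 then Y0 ω else Y1 ω) = y} with hA
  set B : Set Ω := {ω | Y ω = y ∧ X ω = i} with hB
  set C : Set Ω := {ω | X ω = 1 - i} with hC
  haveI : IsProbabilityMeasure (P[|s]) := cond_isProbabilityMeasure hsne
  -- independence gives P (s ∩ A) = P s * P A
  have hSm : MeasurableSet {p : Fin 2 × Fin 2 × (Fin K → Fin 2) |
      (if i = 0 then p.1 else p.2.1) = y} := by
    by_cases hi : i = 0
    · have he : {p : Fin 2 × Fin 2 × (Fin K → Fin 2) | (if i = 0 then p.1 else p.2.1) = y}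
          = Prod.fst ⁻¹' {y} := by ext p; simp [hi]
      rw [he]; exact measurable_fst (measurableSet_singleton y)
    · have he : {p : Fin 2 × Fin 2 × (Fin K → Fin 2) | (if i = 0 then p.1 else p.2.1) = y}
          = (Prod.fst ∘ Prod.snd) ⁻¹' {y} := by ext p; simp [hi]
      rw [he]; exact (measurable_fst.comp measurable_snd) (measurableSet_singleton y)
  have hmul : P (s ∩ A) = P s * P A := by
    have h := hindep.measure_inter_preimage_eq_mul {z}
      {p : Fin 2 × Fin 2 × (Fin K → Fin 2) | (if i = 0 then p.1 else p.2.1) = y}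
      (measurableSet_singleton z) hSm
    have hAeq : A = (fun ω => (Y0 ω, Y1 ω, fun z => Xz z ω)) ⁻¹'
        {p : Fin 2 × Fin 2 × (Fin K → Fin 2) | (if i = 0 then p.1 else p.2.1) = y} := by
      ext ω; by_cases hi : i = 0 <;> simp [hA, hi]
    rw [hAeq]; exact h
  have hcondA : P[|s] A = P A := by
    rw [cond_apply hsm, hmul, ← mul_assoc, ENNReal.inv_mul_cancel hsne hsfin, one_mul]
  have hsub : A ⊆ B ∪ C := by
    intro ω hω
    by_cases hx : X ω = i
    · left
      refine ⟨?_, hx⟩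
      rw [hY ω, hx]
      exact hω
    · right
      have : ∀ a b : Fin 2, a ≠ b → a = 1 - b := by decide
      exact this _ _ hx
  have hle : P A ≤ P[|s] B + P[|s] C := by
    calc P A = P[|s] A := hcondA.symm
    _ ≤ P[|s] (B ∪ C) := measure_mono hsub
    _ ≤ P[|s] B + P[|s] C := measure_union_le B C
  have hBfin : P[|s] B ≠ ⊤ := measure_ne_top _ B
  have hCfin : P[|s] C ≠ ⊤ := measure_ne_top _ C
  calc (P A).toReal ≤ (P[|s] B + P[|s] C).toReal :=
        ENNReal.toReal_mono (ENNReal.add_ne_top.mpr ⟨hBfin, hCfin⟩) hle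
  _ = (P[|s] B).toReal + (P[|s] C).toReal := ENNReal.toReal_add hBfin hCfin
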